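/- Let n ≥ 3 and let f ∈ S = ℂ[x₁, …, xₙ] be a homogeneous polynomial of degree d ≥ 3 defining a smooth hypersurface in ℙ^{n−1} (equivalently, the partial derivatives ∂f/∂x₁, …, ∂f/∂xₙ have no common zero in ℂⁿ ∖ {0}). Let J(f) = (∂f/∂x₁, …, ∂f/∂xₙ) be the gradient ideal and M(f) = S/J(f) the Milnor algebra, an Artinian Gorenstein graded ℂ-algebra with socle degree T = n(d−2). Let A_f ∈ R = ℂ[y₁, …, yₙ] be a homogeneous polynomial of degree T with Ann(A_f) = J(f) (a Macaulay inverse system for M(f)). Then there exists a linear form ℓ ∈ S₁ such that multiplication ℓ^{T−2} : M(f)₁ → M(f)_{T−1} is a linear isomorphism if and only if the Hessian determinant det(∂²A_f/∂yᵢ∂yⱼ) is a nonzero element of R. -/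

import Mathlib

/-!
Write `ℓ_a = ∑ aᵢ xᵢ`. Since `Ann(A) = J`, a form `w` of degree `T - 1` lies in `J` iff every
`xᵢ w` annihilates `A`, and Euler's identity gives `ℓ_a^k ∘ G = k! G(a)` for `G` of degree `k`.
Hence `(xᵢ ℓ_a^{T-2} ℓ_c) ∘ A = (T-2)! (Hess(A)(a) c)ᵢ`, so `ℓ_a^{T-2} ℓ_c ∈ J` exactly when
`Hess(A)(a) c = 0`. If `Hess(A)(a)` is invertible, multiplication by `ℓ_a^{T-2}` is therefore
injective on `M₁`, and surjective onto `M_{T-1}` because any values `(xᵢ w) ∘ A` are matched by a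
suitable `c`. Conversely a kernel vector `c` of `Hess(A)(a)` puts `ℓ_c` in the kernel, and
`ℓ_c ∉ J` for `c ≠ 0` since `J` is generated in degree `d - 1 ≥ 2`. Finally, `det Hess(A) ≠ 0`
iff it is nonzero at some point `a`.
-/

open MvPolynomial

/-- The contraction (apolarity) action of `g ∈ ℂ[x₁,…,xₙ]` on `F ∈ ℂ[y₁,…,yₙ]`,
obtained by identifying `xᵢ` with `∂/∂yᵢ`. -/
noncomputable def contract {n : ℕ} (g F : MvPolynomial (Fin n) ℂ) : MvPolynomial (Fin n) ℂ :=
  ∑ α ∈ g.support, g.coeff α •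
    (List.finRange n).foldr (fun i G => (⇑(pderiv (R := ℂ) i))^[α i] G) F

open scoped Matrix

namespace MvPolynomial

section CommSemiring

variable {σ R : Type*} [CommSemiring R] {p q : MvPolynomial σ R} {m k : ℕ}

theorem IsHomogeneous.iterate_pderiv (h : p.IsHomogeneous m) (i : σ) (k : ℕ) :
    ((⇑(pderiv (R := R) i))^[k] p).IsHomogeneous (m - k) := by
  induction k with
  | zero => simpa using h
  | succ k ih =>
    rw [Function.iterate_succ_apply', Nat.sub_add_eq]
    exact ih.pderiv

theorem IsHomogeneous.eq_C_coeff_zero (h : p.IsHomogeneous 0) : p = C (coeff 0 p) :=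
  totalDegree_eq_zero_iff_eq_C.mp ((totalDegree_zero_iff_isHomogeneous σ).mpr h)

theorem coeff_mul_eq_zero_of_degree_lt (hq : q.IsHomogeneous k) {μ : σ →₀ ℕ}
    (hμ : μ.degree < k) : coeff μ (p * q) = 0 := by
  classical
  rw [coeff_mul]
  refine Finset.sum_eq_zero fun x hx => ?_
  rw [Finset.HasAntidiagonal.mem_antidiagonal] at hx
  rw [hq.coeff_eq_zero (by rw [← hx, map_add] at hμ; omega), mul_zero]

theorem IsHomogeneous.eq_zero_of_mem_span {ι : Type*} [Fintype ι] {g : ι → MvPolynomial σ R}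
    (hg : ∀ i, (g i).IsHomogeneous k) (hmk : m < k) (hp : p.IsHomogeneous m)
    (hmem : p ∈ Ideal.span (Set.range g)) : p = 0 := by
  obtain ⟨h, rfl⟩ := Ideal.mem_span_range_iff_exists_fun.mp hmem
  ext μ
  rw [coeff_zero]
  by_cases hμ : μ.degree = m
  · rw [coeff_sum]
    exact Finset.sum_eq_zero fun i _ => coeff_mul_eq_zero_of_degree_lt (hg i) (hμ ▸ hmk)
  · exact hp.coeff_eq_zero hμ

variable [Fintype σ]

theorem IsHomogeneous.sum_mul_eval_pderiv (h : p.IsHomogeneous m) (a : σ → R) :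
    ∑ i, a i * eval a (pderiv i p) = m * eval a p := by
  simpa using congr(eval a $(h.sum_X_mul_pderiv))

noncomputable def linearForm (c : σ → R) : MvPolynomial σ R := ∑ i, c i • X i

theorem isHomogeneous_linearForm (c : σ → R) : (linearForm c).IsHomogeneous 1 :=
  IsHomogeneous.sum _ _ _ fun i _ => by
    simpa only [smul_eq_C_mul] using (isHomogeneous_X R i).C_mul (c i)

theorem isHomogeneous_one_iff : p.IsHomogeneous 1 ↔ ∃ c, linearForm c = p := by
  rw [← mem_homogeneousSubmodule, homogeneousSubmodule_one_eq_span_X,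
    Submodule.mem_span_range_iff_exists_fun]
  rfl

theorem pderiv_linearForm (c : σ → R) (j : σ) : pderiv j (linearForm c) = C (c j) := by
  classical
  simp [linearForm, pderiv_X, Pi.single_apply, smul_eq_C_mul]

@[simp]
theorem linearForm_zero : linearForm (0 : σ → R) = 0 := by
  simp [linearForm]

theorem linearForm_injective :
    Function.Injective (linearForm : (σ → R) → MvPolynomial σ R) := fun c c' h => by
  ext j
  simpa only [pderiv_linearForm, C_inj] using congr(pderiv j $h)

end CommSemiring

theorem IsHomogeneous.eq_zero_of_forall_pderiv_eq_zero {σ K : Type*} [Fintype σ] [Field K]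
    [CharZero K] {p : MvPolynomial σ K} {m : ℕ} (h : p.IsHomogeneous m) (hm : m ≠ 0)
    (hp : ∀ i, pderiv i p = 0) : p = 0 := by
  have := h.sum_X_mul_pderiv
  simp only [hp, mul_zero, Finset.sum_const_zero] at this
  exact (smul_eq_zero.mp this.symm).resolve_left hm

section CommRing

variable {σ R : Type*} [CommRing R]

theorem pderiv_comm (i j : σ) (p : MvPolynomial σ R) :
    pderiv i (pderiv j p) = pderiv j (pderiv i p) := by
  have h : ⁅pderiv i, pderiv j⁆ = (0 : Derivation R (MvPolynomial σ R) (MvPolynomial σ R)) :=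
    derivation_ext fun k => by
      classical rw [Derivation.commutator_apply]; simp [pderiv_X, Pi.single_apply, apply_ite]
  have := congr($h p)
  rwa [Derivation.commutator_apply, Derivation.zero_apply, sub_eq_zero] at this

noncomputable def hessian (F : MvPolynomial σ R) : Matrix σ σ (MvPolynomial σ R) :=
  .of fun i j => pderiv i (pderiv j F)

noncomputable def iterPderiv (l : List σ) (α : σ →₀ ℕ) : Module.End R (MvPolynomial σ R) :=
  l.foldr (fun i D => (pderiv i).toLinearMap ^ α i * D) 1

@[simp]
theorem iterPderiv_nil (α : σ →₀ ℕ) : iterPderiv (R := R) [] α = 1 := rfl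

theorem iterPderiv_cons (i : σ) (l : List σ) (α : σ →₀ ℕ) :
    iterPderiv (i :: l) α = (pderiv (R := R) i).toLinearMap ^ α i * iterPderiv l α := rfl

theorem iterPderiv_apply (l : List σ) (α : σ →₀ ℕ) (F : MvPolynomial σ R) :
    iterPderiv l α F = l.foldr (fun i G => (⇑(pderiv (R := R) i))^[α i] G) F := by
  induction l with
  | nil => rfl
  | cons i l ih =>
    rw [List.foldr_cons, ← ih, iterPderiv_cons, Module.End.mul_apply, Module.End.pow_apply,
      Derivation.coeFn_coe]

theorem commute_pderiv_iterPderiv (i : σ) (l : List σ) (α : σ →₀ ℕ) :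
    Commute (pderiv (R := R) i).toLinearMap (iterPderiv l α) := by
  induction l with
  | nil => exact Commute.one_right _
  | cons j l ih =>
    refine Commute.mul_right (Commute.pow_right ?_ _) ih
    exact LinearMap.ext fun p => pderiv_comm i j p

theorem iterPderiv_add (l : List σ) (α β : σ →₀ ℕ) :
    iterPderiv (R := R) l (α + β) = iterPderiv l α * iterPderiv l β := by
  induction l with
  | nil => rfl
  | cons i l ih =>
    simp only [iterPderiv_cons, ih, Finsupp.add_apply, pow_add]
    exact (((commute_pderiv_iterPderiv (R := R) i l α).pow_left _).symm.mul_mul_mul_comm _ _).symm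

theorem iterPderiv_eq_one {l : List σ} {α : σ →₀ ℕ} (h : ∀ i ∈ l, α i = 0) :
    iterPderiv (R := R) l α = 1 := by
  induction l with
  | nil => rfl
  | cons i l ih =>
    rw [iterPderiv_cons, h i List.mem_cons_self, ih fun j hj => h j (List.mem_cons_of_mem i hj),
      pow_zero, one_mul]

theorem iterPderiv_single {l : List σ} (hl : l.Nodup) {i : σ} (hi : i ∈ l) :
    iterPderiv (R := R) l (Finsupp.single i 1) = (pderiv i).toLinearMap := by
  induction l with
  | nil => simp at hi
  | cons j l ih =>
    rw [List.nodup_cons] at hl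
    rw [iterPderiv_cons]
    obtain rfl | hi := List.mem_cons.mp hi
    · rw [iterPderiv_eq_one fun k hk => Finsupp.single_eq_of_ne (by rintro rfl; exact hl.1 hk),
        Finsupp.single_eq_same, pow_one, mul_one]
    · rw [Finsupp.single_eq_of_ne (by rintro rfl; exact hl.1 hi), pow_zero, one_mul, ih hl.2 hi]

theorem IsHomogeneous.iterPderiv {F : MvPolynomial σ R} {m : ℕ} (h : F.IsHomogeneous m)
    (l : List σ) (α : σ →₀ ℕ) : (iterPderiv l α F).IsHomogeneous (m - (l.map α).sum) := by
  induction l with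
  | nil => simpa using h
  | cons i l ih =>
    rw [iterPderiv_cons, Module.End.mul_apply, Module.End.pow_apply, List.map_cons, List.sum_cons,
      add_comm, ← Nat.sub_sub]
    exact ih.iterate_pderiv i (α i)

end CommRing

end MvPolynomial

section Contraction

variable {n : ℕ}

noncomputable def contractₗ (F : MvPolynomial (Fin n) ℂ) :
    MvPolynomial (Fin n) ℂ →ₗ[ℂ] MvPolynomial (Fin n) ℂ :=
  (basisMonomials (Fin n) ℂ).constr ℂ fun α => iterPderiv (List.finRange n) α F

theorem contract_eq_contractₗ_apply (g F : MvPolynomial (Fin n) ℂ) :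
    contract g F = contractₗ F g := by
  rw [contractₗ, Module.Basis.constr_apply]
  simp only [contract, iterPderiv_apply]
  rfl

theorem contract_eq_sum (g F : MvPolynomial (Fin n) ℂ) :
    contract g F = ∑ α ∈ g.support, g.coeff α • iterPderiv (List.finRange n) α F := by
  simp only [contract, iterPderiv_apply]

theorem contract_monomial (α : Fin n →₀ ℕ) (c : ℂ) (F : MvPolynomial (Fin n) ℂ) :
    contract (monomial α c) F = c • iterPderiv (List.finRange n) α F := by
  rw [contract_eq_contractₗ_apply, ← mul_one c, ← smul_eq_mul, ← smul_monomial, map_smul,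
    smul_eq_mul, mul_one, contractₗ, show monomial α (1 : ℂ) = basisMonomials (Fin n) ℂ α from rfl,
    Module.Basis.constr_basis]

theorem contract_add_left (g h F : MvPolynomial (Fin n) ℂ) :
    contract (g + h) F = contract g F + contract h F := by
  simp only [contract_eq_contractₗ_apply, map_add]

theorem contract_sub_left (g h F : MvPolynomial (Fin n) ℂ) :
    contract (g - h) F = contract g F - contract h F := by
  simp only [contract_eq_contractₗ_apply, map_sub]

theorem contract_mul (g h F : MvPolynomial (Fin n) ℂ) :
    contract (g * h) F = contract g (contract h F) := by
  induction g using MvPolynomial.induction_on' with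
  | add g g' hg hg' => rw [add_mul, contract_add_left, contract_add_left, hg, hg']
  | monomial α a =>
    induction h using MvPolynomial.induction_on' with
    | add h h' hh hh' =>
      rw [mul_add, contract_add_left, contract_add_left, hh, hh', contract_monomial,
        contract_monomial, contract_monomial, map_add, smul_add]
    | monomial β b =>
      rw [monomial_mul, contract_monomial, contract_monomial, contract_monomial, map_smul,
        iterPderiv_add, Module.End.mul_apply, smul_smul]

theorem contract_X (i : Fin n) (F : MvPolynomial (Fin n) ℂ) : contract (X i) F = pderiv i F := by
  rw [X, contract_monomial, iterPderiv_single (List.nodup_finRange n) (List.mem_finRange i),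
    one_smul, Derivation.coeFn_coe]

theorem contract_one (F : MvPolynomial (Fin n) ℂ) : contract 1 F = F := by
  rw [← C_1, ← monomial_zero', contract_monomial, iterPderiv_eq_one fun _ _ => rfl, one_smul,
    Module.End.one_apply]

theorem MvPolynomial.IsHomogeneous.contract {g F : MvPolynomial (Fin n) ℂ} {k m : ℕ}
    (hg : g.IsHomogeneous k) (hF : F.IsHomogeneous m) : (contract g F).IsHomogeneous (m - k) := by
  rw [contract_eq_sum, ← mem_homogeneousSubmodule]
  refine Submodule.sum_mem _ fun α hα => Submodule.smul_mem _ _ ?_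
  have hk : ((List.finRange n).map α).sum = k := by
    rw [← Fin.sum_univ_def, ← Finsupp.degree_eq_sum, ← hg (mem_support_iff.mp hα),
      Finsupp.degree_eq_weight_one]
    rfl
  exact hk ▸ hF.iterPderiv _ α

theorem contract_linearForm (c : Fin n → ℂ) (F : MvPolynomial (Fin n) ℂ) :
    contract (linearForm c) F = ∑ i, c i • pderiv i F := by
  rw [linearForm, contract_eq_contractₗ_apply, map_sum]
  refine Finset.sum_congr rfl fun i _ => ?_
  rw [map_smul, ← contract_eq_contractₗ_apply, contract_X]

theorem contract_linearForm_pow (a : Fin n → ℂ) {m : ℕ} {G : MvPolynomial (Fin n) ℂ}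
    (hG : G.IsHomogeneous m) : contract (linearForm a ^ m) G = C (m.factorial * eval a G) := by
  induction m generalizing G with
  | zero =>
    rw [pow_zero, contract_one, Nat.factorial_zero, Nat.cast_one, one_mul, hG.eq_C_coeff_zero,
      eval_C]
  | succ m ih =>
    have hG' : (contract (linearForm a) G).IsHomogeneous m :=
      (isHomogeneous_linearForm a).contract hG
    have heval : eval a (contract (linearForm a) G) = (m + 1) * eval a G := by
      simpa [contract_linearForm, smul_eq_C_mul] using hG.sum_mul_eval_pderiv a
    rw [pow_succ, contract_mul, ih hG', heval, Nat.factorial_succ, Nat.cast_mul]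
    congr 1
    push_cast
    ring

theorem contract_X_mul_linearForm_pow_mul {m : ℕ} {A : MvPolynomial (Fin n) ℂ}
    (hA : A.IsHomogeneous (m + 2)) (a c : Fin n → ℂ) (i : Fin n) :
    contract (X i * (linearForm a ^ m * linearForm c)) A =
      C (m.factorial * ((hessian A).map (eval a) *ᵥ c) i) := by
  have hXc : (X i * linearForm c).IsHomogeneous 2 :=
    (isHomogeneous_X ℂ i).mul (isHomogeneous_linearForm c)
  rw [mul_left_comm, contract_mul,
    contract_linearForm_pow a (Nat.add_sub_cancel m 2 ▸ hXc.contract hA)]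
  congr 2
  simp [contract_mul, contract_X, contract_linearForm, hessian, Matrix.mulVec, dotProduct,
    mul_comm]

end Contraction

section Apolarity

variable {n : ℕ} {J : Ideal (MvPolynomial (Fin n) ℂ)} {A : MvPolynomial (Fin n) ℂ} {m : ℕ}
  (hann : ∀ g, contract g A = 0 ↔ g ∈ J)
include hann

/-- `w ∘ A` is a linear form, so it vanishes once all its partial derivatives `(xᵢ w) ∘ A` do. -/
theorem mem_iff_forall_contract_X_mul (hA : A.IsHomogeneous (m + 1)) {w : MvPolynomial (Fin n) ℂ}
    (hw : w.IsHomogeneous m) : w ∈ J ↔ ∀ i, contract (X i * w) A = 0 := by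
  refine ⟨fun h i => by rw [contract_mul, (hann w).mpr h, contract_X, map_zero], fun h => ?_⟩
  rw [← hann]
  refine (hw.contract hA).eq_zero_of_forall_pderiv_eq_zero (by omega) fun i => ?_
  rw [← contract_X, ← contract_mul, h]

theorem linearForm_pow_mul_mem_iff (hA : A.IsHomogeneous (m + 2)) (a c : Fin n → ℂ) :
    linearForm a ^ m * linearForm c ∈ J ↔ (hessian A).map (eval a) *ᵥ c = 0 := by
  have hdeg : (linearForm a ^ m * linearForm c).IsHomogeneous (m + 1) := by
    simpa using ((isHomogeneous_linearForm a).pow m).mul (isHomogeneous_linearForm c)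
  rw [mem_iff_forall_contract_X_mul hann hA hdeg, _root_.funext_iff]
  simp [contract_X_mul_linearForm_pow_mul hA, Nat.factorial_ne_zero]

theorem mem_of_linearForm_pow_mul_mem (hA : A.IsHomogeneous (m + 2)) {a : Fin n → ℂ}
    (hdet : ((hessian A).map (eval a)).det ≠ 0) {u : MvPolynomial (Fin n) ℂ}
    (hu : u.IsHomogeneous 1) (h : linearForm a ^ m * u ∈ J) : u ∈ J := by
  obtain ⟨c, rfl⟩ := isHomogeneous_one_iff.mp hu
  rw [linearForm_pow_mul_mem_iff hann hA] at h
  have hc : c = 0 := Matrix.mulVec_injective_iff_isUnit.mpr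
    ((Matrix.isUnit_iff_isUnit_det _).mpr (isUnit_iff_ne_zero.mpr hdet))
    (h.trans (Matrix.mulVec_zero _).symm)
  simp [hc]

theorem exists_linearForm_pow_mul_sub_mem (hA : A.IsHomogeneous (m + 2)) {a : Fin n → ℂ}
    (hdet : ((hessian A).map (eval a)).det ≠ 0) {v : MvPolynomial (Fin n) ℂ}
    (hv : v.IsHomogeneous (m + 1)) :
    ∃ u, u.IsHomogeneous 1 ∧ linearForm a ^ m * u - v ∈ J := by
  set μ : Fin n → ℂ := fun i => coeff 0 (contract (X i * v) A)
  have hμ (i : Fin n) : contract (X i * v) A = C (μ i) :=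
    ((by omega : m + 2 - (1 + (m + 1)) = 0) ▸
      ((isHomogeneous_X ℂ i).mul hv).contract hA).eq_C_coeff_zero
  obtain ⟨c, hc⟩ := Matrix.mulVec_surjective_iff_isUnit.mpr
    ((Matrix.isUnit_iff_isUnit_det _).mpr (isUnit_iff_ne_zero.mpr hdet)) ((m.factorial : ℂ)⁻¹ • μ)
  refine ⟨linearForm c, isHomogeneous_linearForm c, ?_⟩
  have hdeg : (linearForm a ^ m * linearForm c - v).IsHomogeneous (m + 1) := by
    refine IsHomogeneous.sub ?_ hv
    simpa using ((isHomogeneous_linearForm a).pow m).mul (isHomogeneous_linearForm c)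
  rw [mem_iff_forall_contract_X_mul hann hA hdeg]
  intro i
  have hfac : (m.factorial : ℂ) ≠ 0 := Nat.cast_ne_zero.mpr (Nat.factorial_ne_zero m)
  rw [mul_sub, contract_sub_left, contract_X_mul_linearForm_pow_mul hA, hμ, hc, Pi.smul_apply,
    smul_eq_mul, mul_inv_cancel_left₀ hfac, sub_self]

theorem det_hessian_map_eval_ne_zero (hA : A.IsHomogeneous (m + 2))
    (hlin : ∀ u, u.IsHomogeneous 1 → u ∈ J → u = 0) {a : Fin n → ℂ}
    (hinj : ∀ u, u.IsHomogeneous 1 → linearForm a ^ m * u ∈ J → u ∈ J) :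
    ((hessian A).map (eval a)).det ≠ 0 := by
  intro hdet
  obtain ⟨c, hc, hker⟩ := Matrix.exists_mulVec_eq_zero_iff.mpr hdet
  have hcJ := hinj _ (isHomogeneous_linearForm c)
    ((linearForm_pow_mul_mem_iff hann hA a c).mpr hker)
  exact hc (linearForm_injective (by rw [hlin _ (isHomogeneous_linearForm c) hcJ, linearForm_zero]))

end Apolarity

section GradedPieces

variable {σ R : Type*} [CommRing R]

noncomputable def gradedPiece (J : Ideal (MvPolynomial σ R)) (k : ℕ) :
    Submodule R (MvPolynomial σ R ⧸ J) :=
  (homogeneousSubmodule σ R k).map (Ideal.Quotient.mkₐ R J).toLinearMap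

variable {J : Ideal (MvPolynomial σ R)}

theorem mem_gradedPiece {k : ℕ} {x : MvPolynomial σ R ⧸ J} :
    x ∈ gradedPiece J k ↔ ∃ p : MvPolynomial σ R, p.IsHomogeneous k ∧ Ideal.Quotient.mk J p = x :=
  Iff.rfl

theorem forall_mem_gradedPiece_one_mul_eq_zero_iff (ℓ : MvPolynomial σ R) :
    (∀ x ∈ gradedPiece J 1, Ideal.Quotient.mk J ℓ * x = 0 → x = 0) ↔
      ∀ u : MvPolynomial σ R, u.IsHomogeneous 1 → ℓ * u ∈ J → u ∈ J := by
  simp only [mem_gradedPiece, forall_exists_index, and_imp, forall_apply_eq_imp_iff₂, ← map_mul,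
    Ideal.Quotient.eq_zero_iff_mem]

theorem forall_mem_gradedPiece_exists_mul_eq_iff (ℓ : MvPolynomial σ R) (k : ℕ) :
    (∀ y ∈ gradedPiece J k, ∃ x ∈ gradedPiece J 1, Ideal.Quotient.mk J ℓ * x = y) ↔
      ∀ v : MvPolynomial σ R, v.IsHomogeneous k →
        ∃ u : MvPolynomial σ R, u.IsHomogeneous 1 ∧ ℓ * u - v ∈ J := by
  simp only [mem_gradedPiece, forall_exists_index, and_imp, forall_apply_eq_imp_iff₂,
    exists_exists_and_eq_and, ← map_mul, Ideal.Quotient.mk_eq_mk_iff_sub_mem]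

end GradedPieces

theorem stmt1_general (n : ℕ) (hn : 3 ≤ n)
    (f : MvPolynomial (Fin n) ℂ) (d : ℕ) (hd : 3 ≤ d) (hfhom : f.IsHomogeneous d)
    (J : Ideal (MvPolynomial (Fin n) ℂ))
    (hJ : J = Ideal.span (Set.range fun i => pderiv i f))
    (T : ℕ) (hT : T = n * (d - 2))
    (A : MvPolynomial (Fin n) ℂ) (hA : A.IsHomogeneous T)
    (hann : ∀ g : MvPolynomial (Fin n) ℂ, contract g A = 0 ↔ g ∈ J)
    (M : ℕ → Submodule ℂ (MvPolynomial (Fin n) ℂ ⧸ J))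
    (hM : ∀ k, M k = (homogeneousSubmodule (Fin n) ℂ k).map
      (Ideal.Quotient.mkₐ ℂ J).toLinearMap) :
    (∃ ℓ ∈ homogeneousSubmodule (Fin n) ℂ 1,
      (∀ x ∈ M 1, Ideal.Quotient.mk J (ℓ ^ (T - 2)) * x = 0 → x = 0) ∧
      (∀ y ∈ M (T - 1), ∃ x ∈ M 1, Ideal.Quotient.mk J (ℓ ^ (T - 2)) * x = y)) ↔
    Matrix.det (Matrix.of fun i j => pderiv i (pderiv j A)) ≠ 0 := by
  obtain rfl : M = gradedPiece J := funext hM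
  obtain ⟨m, rfl⟩ : ∃ m, T = m + 2 :=
    ⟨T - 2, by have := Nat.mul_le_mul hn (by omega : 1 ≤ d - 2); omega⟩
  have hlin (u : MvPolynomial (Fin n) ℂ) (hu : u.IsHomogeneous 1) (huJ : u ∈ J) : u = 0 :=
    hu.eq_zero_of_mem_span (fun i => hfhom.pderiv) (by omega) (hJ ▸ huJ)
  simp only [Nat.add_sub_cancel, show m + 2 - 1 = m + 1 by omega, mem_homogeneousSubmodule,
    forall_mem_gradedPiece_one_mul_eq_zero_iff, forall_mem_gradedPiece_exists_mul_eq_iff]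
  change _ ↔ (hessian A).det ≠ 0
  constructor
  · rintro ⟨ℓ, hℓ, hinj, -⟩ hdet
    obtain ⟨a, rfl⟩ := isHomogeneous_one_iff.mp hℓ
    refine det_hessian_map_eval_ne_zero hann hA hlin hinj ?_
    rw [← RingHom.mapMatrix_apply, ← RingHom.map_det, hdet, map_zero]
  · intro hdet
    obtain ⟨a, ha⟩ : ∃ a, eval a (hessian A).det ≠ 0 := by
      by_contra! h
      exact hdet (MvPolynomial.funext fun a => by simpa using h a)
    rw [RingHom.map_det] at ha
    exact ⟨linearForm a, isHomogeneous_linearForm a,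
      fun u hu => mem_of_linearForm_pow_mul_mem hann hA ha hu,
      fun v hv => exists_linearForm_pow_mul_sub_mem hann hA ha hv⟩

theorem stmt1 (n : ℕ) (hn : 3 ≤ n)
    (f : MvPolynomial (Fin n) ℂ) (d : ℕ) (hd : 3 ≤ d) (hfhom : f.IsHomogeneous d)
    (hsmooth : ∀ a : Fin n → ℂ, (∀ i, eval a (pderiv i f) = 0) → a = 0)
    (J : Ideal (MvPolynomial (Fin n) ℂ))
    (hJ : J = Ideal.span (Set.range fun i => pderiv i f))
    (T : ℕ) (hT : T = n * (d - 2))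
    (A : MvPolynomial (Fin n) ℂ) (hA : A.IsHomogeneous T)
    (hann : ∀ g : MvPolynomial (Fin n) ℂ, contract g A = 0 ↔ g ∈ J)
    (M : ℕ → Submodule ℂ (MvPolynomial (Fin n) ℂ ⧸ J))
    (hM : ∀ k, M k = (homogeneousSubmodule (Fin n) ℂ k).map
      (Ideal.Quotient.mkₐ ℂ J).toLinearMap) :
    (∃ ℓ ∈ homogeneousSubmodule (Fin n) ℂ 1,
      (∀ x ∈ M 1, Ideal.Quotient.mk J (ℓ ^ (T - 2)) * x = 0 → x = 0) ∧
      (∀ y ∈ M (T - 1), ∃ x ∈ M 1, Ideal.Quotient.mk J (ℓ ^ (T - 2)) * x = y)) ↔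
    Matrix.det (Matrix.of fun i j => pderiv i (pderiv j A)) ≠ 0 :=
  stmt1_general n hn f d hd hfhom J hJ T hT A hA hann M hM
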